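/- arXiv:1601.06333 — 4 statements merged into one kernel-verified Lean document; each statement's English description precedes it below -/
import Mathlib

section
/- If W and V are independent nonnegative random variables each satisfying the NBUE property (E[W - t | W > t] ≤ E[W] for all t > 0), then their sum W + V also satisfies the NBUE property. -/
/-!
With `x⁺ = max x 0`, NBUE for `t > 0` says `E[(W - t)⁺] ≤ E[W] P(W > t)`; letting `t ↓ 0` gives
`E[W] ≤ E[W] P(W > 0)`, which extends the bound to `E[(W - s)⁺] ≤ E[W] P(W > s) + (-s)⁺` for every
real `s`. Conditioning on `V = v` (independence and Fubini) and taking `s = t - v` yields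
`E[(W + V - t)⁺] ≤ E[W] P(W + V > t) + E[(V - t)⁺]`, and NBUE for `V` bounds the last term by
`E[V] P(V > t) ≤ E[V] P(W + V > t)`.
-/

open MeasureTheory

/-- A nonnegative random variable `W` is NBUE (New Better than Used in Expectation)
if for all `t > 0` with `P(W > t) > 0`, `E[W - t | W > t] ≤ E[W]`. -/
def NBUE {Ω : Type*} [MeasurableSpace Ω] (μ : Measure Ω) (W : Ω → ℝ) : Prop :=
  ∀ t : ℝ, 0 < t → μ {ω | t < W ω} ≠ 0 →
    (∫ ω in {ω | t < W ω}, (W ω - t) ∂μ) / (μ {ω | t < W ω}).toReal ≤ ∫ ω, W ω ∂μ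

open ProbabilityTheory Set

section

variable {Ω : Type*} [MeasurableSpace Ω] {μ : Measure Ω}

theorem ProbabilityTheory.IndepFun.integral_comp₂_eq_integral_integral
    {α β E : Type*} [MeasurableSpace α] [MeasurableSpace β]
    [NormedAddCommGroup E] [NormedSpace ℝ E] [IsFiniteMeasure μ]
    {X : Ω → α} {Y : Ω → β} (hX : Measurable X) (hY : Measurable Y) (hXY : IndepFun X Y μ)
    {g : α → β → E} (hg : StronglyMeasurable (Function.uncurry g))
    (hgi : Integrable (fun ω => g (X ω) (Y ω)) μ) :
    ∫ ω, g (X ω) (Y ω) ∂μ = ∫ y, ∫ ω, g (X ω) y ∂μ ∂(μ.map Y) := by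
  have hYX : Measurable fun ω => (Y ω, X ω) := hY.prodMk hX
  have hmap : μ.map (fun ω => (Y ω, X ω)) = (μ.map Y).prod (μ.map X) :=
    hXY.symm.map_prod_eq_prod_map_map hY.aemeasurable hX.aemeasurable
  have hf : StronglyMeasurable fun p : β × α => g p.2 p.1 := hg.comp_measurable measurable_swap
  have hfi : Integrable (fun p : β × α => g p.2 p.1) ((μ.map Y).prod (μ.map X)) := by
    rwa [← hmap, integrable_map_measure hf.aestronglyMeasurable hYX.aemeasurable]
  rw [← integral_map hYX.aemeasurable (f := fun p : β × α => g p.2 p.1) hf.aestronglyMeasurable,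
    hmap, integral_prod _ hfi]
  congr 1 with y
  exact integral_map hX.aemeasurable
    (hf.comp_measurable measurable_prodMk_left).aestronglyMeasurable

theorem setIntegral_lt_sub_eq_integral_max {f : Ω → ℝ} (hf : Measurable f) (t : ℝ) :
    ∫ ω in {ω | t < f ω}, (f ω - t) ∂μ = ∫ ω, max (f ω - t) 0 ∂μ := by
  rw [← integral_indicator (measurableSet_lt measurable_const hf)]
  congr 1 with ω
  rcases lt_or_ge t (f ω) with h | h
  · simp [h, h.le]
  · simp [h, h.not_gt]

theorem ProbabilityTheory.IndepFun.measureReal_lt_add_eq_integral [IsFiniteMeasure μ]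
    {W V : Ω → ℝ} (hWm : Measurable W) (hVm : Measurable V) (hWV : IndepFun W V μ) (t : ℝ) :
    μ.real {ω | t < W ω + V ω} = ∫ v, μ.real {ω | t - v < W ω} ∂(μ.map V) := by
  have hslice (v : ℝ) :
      μ.real {ω | t - v < W ω} = ∫ ω, (Ioi t).indicator 1 (W ω + v) ∂μ := by
    rw [← integral_indicator_one (measurableSet_lt measurable_const hWm)]
    congr 1 with ω
    simp [indicator, sub_lt_iff_lt_add]
  have hAm : MeasurableSet {ω | t < W ω + V ω} := measurableSet_lt measurable_const (hWm.add hVm)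
  rw [← integral_indicator_one hAm]
  simp_rw [hslice]
  exact hWV.integral_comp₂_eq_integral_integral hWm hVm
    (g := fun w v => (Ioi t).indicator (1 : ℝ → ℝ) (w + v))
    ((measurable_one.indicator measurableSet_Ioi).comp measurable_add).stronglyMeasurable
    ((integrable_const (1 : ℝ)).indicator hAm)

theorem integrable_measureReal_sub_lt [IsFiniteMeasure μ] (ν : Measure ℝ) [IsFiniteMeasure ν]
    (W : Ω → ℝ) (t : ℝ) :
    Integrable (fun v => μ.real {ω | t - v < W ω}) ν := by
  have hmono : Monotone fun v => μ.real {ω | t - v < W ω} := fun v v' hvv' =>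
    measureReal_mono fun ω (hω : t - v < W ω) => show t - v' < W ω by linarith
  refine Integrable.of_bound (C := μ.real univ) hmono.measurable.aestronglyMeasurable
    (ae_of_all _ fun v => ?_)
  rw [Real.norm_of_nonneg measureReal_nonneg]
  exact measureReal_mono (subset_univ _)

namespace NBUE

variable {W : Ω → ℝ}

theorem integral_max_sub_le_of_pos [IsFiniteMeasure μ] (hW : NBUE μ W) (hWm : Measurable W)
    (hWnn : ∀ ω, 0 ≤ W ω) {t : ℝ} (ht : 0 < t) :
    ∫ ω, max (W ω - t) 0 ∂μ ≤ (∫ ω, W ω ∂μ) * μ.real {ω | t < W ω} := by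
  by_cases h0 : μ {ω | t < W ω} = 0
  · have hzero : (fun ω => max (W ω - t) 0) =ᵐ[μ] fun _ => 0 := by
      filter_upwards [measure_eq_zero_iff_ae_notMem.1 h0] with ω hω
      simpa using (not_lt.1 hω)
    rw [integral_congr_ae hzero, integral_zero]
    exact mul_nonneg (integral_nonneg hWnn) measureReal_nonneg
  · have hpos : 0 < μ.real {ω | t < W ω} := ENNReal.toReal_pos h0 (measure_ne_top _ _)
    rw [← setIntegral_lt_sub_eq_integral_max hWm, ← div_le_iff₀ hpos]
    exact hW t ht h0

variable [IsProbabilityMeasure μ]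

theorem integral_le_mul_measureReal_pos (hW : NBUE μ W) (hWm : Measurable W)
    (hWnn : ∀ ω, 0 ≤ W ω) (hWi : Integrable W μ) :
    ∫ ω, W ω ∂μ ≤ (∫ ω, W ω ∂μ) * μ.real {ω | 0 < W ω} := by
  refine le_of_forall_pos_le_add fun ε hε => ?_
  have hmono : μ.real {ω | ε < W ω} ≤ μ.real {ω | 0 < W ω} :=
    measureReal_mono fun ω (hω : ε < W ω) => hε.trans hω
  have hsplit : ∫ ω, W ω ∂μ ≤ ∫ ω, max (W ω - ε) 0 ∂μ + ε := by
    have hint : Integrable (fun ω => max (W ω - ε) 0) μ := (hWi.sub (integrable_const ε)).pos_part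
    calc ∫ ω, W ω ∂μ ≤ ∫ ω, (max (W ω - ε) 0 + ε) ∂μ :=
          integral_mono hWi (hint.add (integrable_const ε)) fun ω => by
            linarith [le_max_left (W ω - ε) 0]
      _ = ∫ ω, max (W ω - ε) 0 ∂μ + ε := by simp [integral_add hint (integrable_const ε)]
  calc ∫ ω, W ω ∂μ ≤ ∫ ω, max (W ω - ε) 0 ∂μ + ε := hsplit
    _ ≤ (∫ ω, W ω ∂μ) * μ.real {ω | ε < W ω} + ε := by
      gcongr; exact hW.integral_max_sub_le_of_pos hWm hWnn hε
    _ ≤ (∫ ω, W ω ∂μ) * μ.real {ω | 0 < W ω} + ε := by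
      gcongr; exact integral_nonneg hWnn

theorem integral_max_sub_le (hW : NBUE μ W) (hWm : Measurable W) (hWnn : ∀ ω, 0 ≤ W ω)
    (hWi : Integrable W μ) (s : ℝ) :
    ∫ ω, max (W ω - s) 0 ∂μ ≤ (∫ ω, W ω ∂μ) * μ.real {ω | s < W ω} + max (-s) 0 := by
  rcases lt_or_ge 0 s with hs | hs
  · simpa [hs.le] using hW.integral_max_sub_le_of_pos hWm hWnn hs
  have hshift : ∫ ω, max (W ω - s) 0 ∂μ = ∫ ω, W ω ∂μ - s := by
    rw [integral_congr_ae (g := fun ω => W ω - s)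
      (ae_of_all _ fun ω => max_eq_left (by linarith [hWnn ω])),
      integral_sub hWi (integrable_const s)]
    simp
  calc ∫ ω, max (W ω - s) 0 ∂μ = ∫ ω, W ω ∂μ - s := hshift
    _ ≤ (∫ ω, W ω ∂μ) * μ.real {ω | 0 < W ω} + -s := by
      linarith [hW.integral_le_mul_measureReal_pos hWm hWnn hWi]
    _ ≤ (∫ ω, W ω ∂μ) * μ.real {ω | s < W ω} + max (-s) 0 := by
      have hsub : {ω | 0 < W ω} ⊆ {ω | s < W ω} := fun ω (hω : 0 < W ω) => hs.trans_lt hω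
      exact add_le_add (mul_le_mul_of_nonneg_left (measureReal_mono hsub) (integral_nonneg hWnn))
        (le_max_left _ _)

theorem integral_max_add_sub_le (hW : NBUE μ W) (hWm : Measurable W) (hWnn : ∀ ω, 0 ≤ W ω)
    (hWi : Integrable W μ) {V : Ω → ℝ} (hVm : Measurable V) (hVi : Integrable V μ)
    (hWV : IndepFun W V μ) (t : ℝ) :
    ∫ ω, max (W ω + V ω - t) 0 ∂μ ≤
      (∫ ω, W ω ∂μ) * μ.real {ω | t < W ω + V ω} + ∫ ω, max (V ω - t) 0 ∂μ := by
  have hSi := integrable_measureReal_sub_lt (μ := μ) (μ.map V) W t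
  have hVti : Integrable (fun v => max (v - t) 0) (μ.map V) :=
    (integrable_map_measure (by fun_prop) hVm.aemeasurable).2
      (hVi.sub (integrable_const t)).pos_part
  calc ∫ ω, max (W ω + V ω - t) 0 ∂μ
      = ∫ v, ∫ ω, max (W ω + v - t) 0 ∂μ ∂(μ.map V) :=
        hWV.integral_comp₂_eq_integral_integral hWm hVm (g := fun w v => max (w + v - t) 0)
          (by fun_prop) ((hWi.add hVi).sub (integrable_const t)).pos_part
    _ ≤ ∫ v, ((∫ ω, W ω ∂μ) * μ.real {ω | t - v < W ω} + max (v - t) 0) ∂(μ.map V) :=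
        integral_mono_of_nonneg (ae_of_all _ fun v => integral_nonneg fun ω => le_max_right _ _)
          ((hSi.const_mul _).add hVti) (ae_of_all _ fun v => by
            simpa only [sub_sub_eq_add_sub, neg_sub] using
              hW.integral_max_sub_le hWm hWnn hWi (t - v))
    _ = (∫ ω, W ω ∂μ) * μ.real {ω | t < W ω + V ω} + ∫ ω, max (V ω - t) 0 ∂μ := by
        rw [integral_add (hSi.const_mul _) hVti, integral_const_mul,
          ← hWV.measureReal_lt_add_eq_integral hWm hVm,
          integral_map hVm.aemeasurable (by fun_prop)]

end NBUE

end

/-- If `W` and `V` are independent nonnegative NBUE random variables, then `W + V` is NBUE. -/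
theorem nbue_add {Ω : Type*} [MeasurableSpace Ω] (μ : Measure Ω) [IsProbabilityMeasure μ]
    (W V : Ω → ℝ) (hWm : Measurable W) (hVm : Measurable V)
    (hWnn : ∀ ω, 0 ≤ W ω) (hVnn : ∀ ω, 0 ≤ V ω)
    (hWint : Integrable W μ) (hVint : Integrable V μ)
    (hindep : ProbabilityTheory.IndepFun W V μ)
    (hW : NBUE μ W) (hV : NBUE μ V) :
    NBUE μ (fun ω => W ω + V ω) := by
  intro t ht hA
  simp only at hA ⊢
  have hApos : 0 < μ.real {ω | t < W ω + V ω} := ENNReal.toReal_pos hA (measure_ne_top _ _)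
  have hVA : μ.real {ω | t < V ω} ≤ μ.real {ω | t < W ω + V ω} :=
    measureReal_mono fun ω (hω : t < V ω) => show t < W ω + V ω by linarith [hWnn ω]
  rw [← measureReal_def, div_le_iff₀ hApos,
    setIntegral_lt_sub_eq_integral_max (f := fun ω => W ω + V ω) (hWm.add hVm),
    integral_add hWint hVint, add_mul]
  refine (hW.integral_max_add_sub_le hWm hWnn hWint hVm hVint hindep t).trans ?_
  gcongr
  exact (hV.integral_max_sub_le_of_pos hVm hVnn ht).trans
    (mul_le_mul_of_nonneg_left hVA (integral_nonneg hVnn))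
end

section
/- Priority-decision inner-bound inclusion implies stability (finite-state drift version): let α ∈ ℝ^n with α_i > 0, q' ∈ ℝ^n_{≥0}, and for every priority decision d (a permutation of {1,...,n}) a payoff vector p(d) ∈ [0,1]^n. Suppose for every k ∈ {1,...,n} and every permutation d, Σ_{j=1}^{k} α_{d_j} q'_{d_j} ≤ Σ_{j=1}^{k} α_{d_j} p_{d_j}(d). Then for every x ∈ ℝ^n_{≥0} and the LDF permutation d of x (i.e., x_{d_1} ≥ x_{d_2} ≥ ... ≥ x_{d_n}), the weighted inner product satisfies Σ_i α_i x_i (q'_i − p_i(d)) ≤ 0. -/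
/-!
Reindex the sum along the LDF order `d`, so that the weights `x (d j)` are nonincreasing and
nonnegative. Abel summation then writes the sum as a nonnegative combination of the prefix sums
`Σ_{j ≤ k} α_{d j} (q'_{d j} - p_{d j}(d))`, each of which is nonpositive by hypothesis.
-/

open Finset

theorem Finset.sum_mul_nonpos_of_antitoneOn_of_prefix_sum_nonpos {ι R : Type*} [LinearOrder ι]
    [CommRing R] [PartialOrder R] [IsOrderedRing R] (s : Finset ι) {f g : ι → R}
    (hg : AntitoneOn g s) (hg0 : ∀ i ∈ s, 0 ≤ g i)
    (hf : ∀ k ∈ s, ∑ j ∈ s with j ≤ k, f j ≤ 0) :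
    ∑ j ∈ s, g j * f j ≤ 0 := by
  classical
  induction s using Finset.induction_on_max generalizing g with
  | empty => simp
  | insert a s has ih =>
    have ha : a ∉ s := fun h => lt_irrefl a (has a h)
    have hprefix : ∀ k ∈ s, ∑ j ∈ s with j ≤ k, f j = ∑ j ∈ insert a s with j ≤ k, f j := by
      intro k hk
      rw [filter_insert, if_neg (not_le.mpr (has k hk))]
    have htotal : ∑ j ∈ insert a s with j ≤ a, f j = ∑ j ∈ insert a s, f j := by
      rw [filter_true_of_mem]
      intro j hj
      rcases mem_insert.mp hj with rfl | hj
      exacts [le_rfl, (has j hj).le]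
    have hrest : ∑ j ∈ s, (g j - g a) * f j ≤ 0 := by
      refine ih (fun i hi j hj hij => ?_) (fun i hi => ?_) (fun k hk => ?_)
      · exact sub_le_sub_right (hg (mem_insert_of_mem hi) (mem_insert_of_mem hj) hij) _
      · exact sub_nonneg.mpr (hg (mem_insert_of_mem hi) (mem_insert_self a s) (has i hi).le)
      · exact (hprefix k hk).symm ▸ hf k (mem_insert_of_mem hk)
    have hlast : g a * ∑ j ∈ insert a s, f j ≤ 0 :=
      mul_nonpos_of_nonneg_of_nonpos (hg0 a (mem_insert_self a s))
        (htotal ▸ hf a (mem_insert_self a s))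
    calc ∑ j ∈ insert a s, g j * f j
        = ∑ j ∈ s, (g j - g a) * f j + g a * ∑ j ∈ insert a s, f j := by
          simp only [sum_insert ha, sub_mul, sum_sub_distrib, mul_add, mul_sum]
          ring
      _ ≤ 0 := add_nonpos hrest hlast

theorem ldf_drift_le_zero_general (n : ℕ)
    (α q' : Fin n → ℝ)
    (p : Equiv.Perm (Fin n) → Fin n → ℝ)
    (hprefix : ∀ (d : Equiv.Perm (Fin n)) (k : Fin n),
      ∑ j ∈ Finset.Iic k, α (d j) * q' (d j) ≤ ∑ j ∈ Finset.Iic k, α (d j) * p d (d j))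
    (x : Fin n → ℝ) (hx : ∀ i, 0 ≤ x i)
    (d : Equiv.Perm (Fin n)) (hd : ∀ i j : Fin n, i ≤ j → x (d j) ≤ x (d i)) :
    ∑ i, α i * x i * (q' i - p d i) ≤ 0 := by
  have hreindex : ∑ i, α i * x i * (q' i - p d i)
      = ∑ j, x (d j) * (α (d j) * (q' (d j) - p d (d j))) := by
    rw [← Equiv.sum_comp d]
    exact sum_congr rfl fun j _ => by ring
  rw [hreindex]
  refine univ.sum_mul_nonpos_of_antitoneOn_of_prefix_sum_nonpos
    (fun i _ j _ hij => hd i j hij) (fun i _ => hx (d i)) (fun k _ => ?_)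
  rw [filter_ge_eq_Iic]
  simp only [mul_sub, sum_sub_distrib]
  exact sub_nonpos.mpr (hprefix d k)

/-- Key deterministic inequality of the Lyapunov drift proof: if for every priority
decision (permutation) `d` and every `k`, the weighted prefix sums satisfy
`Σ_{j≤k} α_{d j} q'_{d j} ≤ Σ_{j≤k} α_{d j} p_{d j}(d)`, then for any nonnegative
deficit vector `x` and the LDF permutation `d` of `x` (sorting `x` nonincreasingly),
`Σ_i α_i x_i (q'_i − p_i(d)) ≤ 0`. -/
theorem ldf_drift_le_zero (n : ℕ)
    (α q' : Fin n → ℝ) (hα : ∀ i, 0 < α i) (hq' : ∀ i, 0 ≤ q' i)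
    (p : Equiv.Perm (Fin n) → Fin n → ℝ)
    (hp : ∀ d i, 0 ≤ p d i ∧ p d i ≤ 1)
    (hprefix : ∀ (d : Equiv.Perm (Fin n)) (k : Fin n),
      ∑ j ∈ Finset.Iic k, α (d j) * q' (d j) ≤ ∑ j ∈ Finset.Iic k, α (d j) * p d (d j))
    (x : Fin n → ℝ) (hx : ∀ i, 0 ≤ x i)
    (d : Equiv.Perm (Fin n)) (hd : ∀ i j : Fin n, i ≤ j → x (d j) ≤ x (d i)) :
    ∑ i, α i * x i * (q' i - p d i) ≤ 0 :=
  ldf_drift_le_zero_general n α q' p hprefix x hx d hd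
end

section
/- Efficiency bound for TS with deterministic workloads: let μ_1,...,μ_n > 0, q ∈ [0,1]^n with Σ_{i∈N} q_i μ_i ≤ mδ, and each μ_i ≤ mδ. Fix a subset S ⊆ N and an ordering d of N that places S first. Define p_i(d) = 1 if i is among the greedy prefix J(d) = {d_1,...,d_{j(d)}} with j(d) = max{ j : Σ_{i=1}^{j} μ_{d_i} ≤ mδ }, and p_i(d) = 0 otherwise. Then Σ_{i∈S} μ_i p_i(d) ≥ (1 − (max_i μ_i)/(mδ)) · Σ_{i∈S} μ_i q_i. -/
/-!
If the greedy prefix `J(d)` contains `S`, then `Σ_{S} μ p = Σ_{S} μ ≥ Σ_{S} μ q`. Otherwise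
`J(d) ⊆ S`, because `d` lists `S` first, and maximality of `j(d)` says that adding the next task
overflows, so the load of `J(d)` exceeds `mδ − max μ = (1 − max μ / (mδ)) · mδ`; feasibility of `q`
bounds `Σ_{S} μ q` by `mδ`.
-/

open Finset

lemma one_sub_div_mul_le {A B C M : ℝ} (hM : 0 ≤ M) (hMC : M ≤ C) (hA : 0 ≤ A) (hAC : A ≤ C)
    (hB : A ≤ B ∨ C - M ≤ B) : (1 - M / C) * A ≤ B := by
  have hC : 0 ≤ C := hM.trans hMC
  have hfac_le_one : 1 - M / C ≤ 1 := sub_le_self _ (div_nonneg hM hC)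
  have hfac_nonneg : 0 ≤ 1 - M / C := sub_nonneg.2 (div_le_one_of_le₀ hMC hC)
  rcases hB with hB | hB
  · exact (mul_le_of_le_one_left hA hfac_le_one).trans hB
  · calc (1 - M / C) * A ≤ (1 - M / C) * C := mul_le_mul_of_nonneg_left hAC hfac_nonneg
      _ = C - M := by
        rw [sub_mul, one_mul, div_mul_cancel_of_imp fun h => le_antisymm (hMC.trans_eq h) hM]
      _ ≤ B := hB

lemma sum_filter_val_lt_succ {M : Type*} [AddCommMonoid M] {n k : ℕ} (hk : k < n)
    (g : Fin n → M) :
    ∑ i ∈ univ.filter (fun i : Fin n => (i : ℕ) < k + 1), g i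
      = g ⟨k, hk⟩ + ∑ i ∈ univ.filter (fun i : Fin n => (i : ℕ) < k), g i := by
  have hinsert : univ.filter (fun i : Fin n => (i : ℕ) < k + 1)
      = insert ⟨k, hk⟩ (univ.filter (fun i : Fin n => (i : ℕ) < k)) := by
    ext i
    simp only [mem_filter, mem_univ, true_and, mem_insert, Fin.ext_iff]
    omega
  rw [hinsert, sum_insert (by simp)]

lemma sub_lt_sum_filter_val_lt {n k : ℕ} (hk : k < n) {g : Fin n → ℝ} {C M : ℝ}
    (hgM : ∀ i, g i ≤ M) (hC : C < ∑ i ∈ univ.filter (fun i : Fin n => (i : ℕ) < k + 1), g i) :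
    C - M < ∑ i ∈ univ.filter (fun i : Fin n => (i : ℕ) < k), g i := by
  rw [sum_filter_val_lt_succ hk] at hC
  linarith [hgM ⟨k, hk⟩]

section PrefixIndicator

variable {R : Type*} [NonAssocSemiring R] {n : ℕ} (f : Fin n → R) {S : Finset (Fin n)}
  {d : Equiv.Perm (Fin n)} {k : ℕ}

lemma sum_mul_prefix_indicator_of_subset (hS : ∀ i ∈ S, (d.symm i : ℕ) < k) :
    ∑ i ∈ S, f i * (if (d.symm i : ℕ) < k then 1 else 0) = ∑ i ∈ S, f i :=
  sum_congr rfl fun i hi => by rw [if_pos (hS i hi), mul_one]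

lemma sum_mul_prefix_indicator_of_prefix_subset (hS : ∀ i : Fin n, (i : ℕ) < k → d i ∈ S) :
    ∑ i ∈ S, f i * (if (d.symm i : ℕ) < k then 1 else 0)
      = ∑ i ∈ univ.filter (fun i : Fin n => (i : ℕ) < k), f (d i) := by
  calc ∑ i ∈ S, f i * (if (d.symm i : ℕ) < k then 1 else 0)
      = ∑ i, f i * (if (d.symm i : ℕ) < k then 1 else 0) := by
        refine sum_subset (subset_univ S) fun i _ hi => ?_
        rw [if_neg fun h => hi (by simpa using hS _ h), mul_zero]
    _ = ∑ i, f (d i) * (if (i : ℕ) < k then 1 else 0) := by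
        rw [← Equiv.sum_comp d]
        simp only [Equiv.symm_apply_apply]
    _ = ∑ i ∈ univ.filter (fun i : Fin n => (i : ℕ) < k), f (d i) := by
        simp only [mul_ite, mul_one, mul_zero, sum_filter]

end PrefixIndicator

theorem ts_llref_efficiency_bound_general (n : ℕ) (hn : n ≠ 0) (m : ℕ)
    (δ : ℝ)
    (μ : Fin n → ℝ) (hμpos : ∀ i, 0 < μ i) (hμle : ∀ i, μ i ≤ (m : ℝ) * δ)
    (q : Fin n → ℝ) (hq : ∀ i, 0 ≤ q i ∧ q i ≤ 1)
    (hfeas : ∑ i, q i * μ i ≤ (m : ℝ) * δ)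
    (S : Finset (Fin n)) (d : Equiv.Perm (Fin n))
    (hSfirst : ∀ i : Fin n, d i ∈ S ↔ (i : ℕ) < S.card)
    (jd : ℕ)
    (hmaxsel : jd = n ∨
      (m : ℝ) * δ < ∑ i ∈ univ.filter (fun i : Fin n => (i : ℕ) < jd + 1), μ (d i))
    (p : Fin n → ℝ)
    (hp : ∀ i : Fin n, p i = if ((d.symm i : ℕ) < jd) then (1 : ℝ) else 0) :
    (1 - (univ.sup' (univ_nonempty_iff.mpr ⟨⟨0, Nat.pos_of_ne_zero hn⟩⟩) μ) / ((m : ℝ) * δ))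
        * ∑ i ∈ S, μ i * q i
      ≤ ∑ i ∈ S, μ i * p i := by
  set M := univ.sup' (univ_nonempty_iff.mpr ⟨⟨0, Nat.pos_of_ne_zero hn⟩⟩) μ
  have hμM : ∀ i, μ i ≤ M := fun i => le_sup' μ (mem_univ i)
  have hMC : M ≤ (m : ℝ) * δ := sup'_le _ _ fun i _ => hμle i
  have hSq_le_load : ∑ i ∈ S, μ i * q i ≤ (m : ℝ) * δ :=
    calc ∑ i ∈ S, μ i * q i ≤ ∑ i, μ i * q i :=
          sum_le_sum_of_subset_of_nonneg (subset_univ S)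
            fun i _ _ => mul_nonneg (hμpos i).le (hq i).1
      _ ≤ (m : ℝ) * δ := by simpa only [mul_comm] using hfeas
  refine one_sub_div_mul_le ((hμpos _).le.trans (hμM ⟨0, Nat.pos_of_ne_zero hn⟩)) hMC
    (sum_nonneg fun i _ => mul_nonneg (hμpos i).le (hq i).1) hSq_le_load ?_
  obtain rfl : p = fun i => if ((d.symm i : ℕ) < jd) then (1 : ℝ) else 0 := funext hp
  rcases le_or_gt S.card jd with hSjd | hjdS
  · left
    rw [sum_mul_prefix_indicator_of_subset μ fun i hi =>
      ((hSfirst _).1 (by simpa using hi)).trans_le hSjd]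
    exact sum_le_sum fun i _ => mul_le_of_le_one_right (hμpos i).le (hq i).2
  · right
    rw [sum_mul_prefix_indicator_of_prefix_subset μ fun i hi => (hSfirst i).2 (hi.trans hjdS)]
    have hjdn : jd < n := hjdS.trans_le ((card_le_univ S).trans_eq (Fintype.card_fin n))
    exact (sub_lt_sum_filter_val_lt hjdn (fun i => hμM (d i)) (hmaxsel.resolve_left hjdn.ne)).le

/-- Efficiency bound for task selection with deterministic workloads: with
`Σ_i q_i μ_i ≤ mδ`, each `μ_i ≤ mδ`, an ordering `d` placing the subset `S` first,
greedy prefix `J(d) = {d 0, ..., d (jd - 1)}` with `jd = max { j : Σ_{i<j} μ (d i) ≤ mδ }`,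
and `p i = 1` iff `i ∈ J(d)`, one has
`Σ_{i∈S} μ_i p_i ≥ (1 − (max_i μ_i)/(mδ)) Σ_{i∈S} μ_i q_i`. -/
theorem ts_llref_efficiency_bound (n : ℕ) (hn : n ≠ 0) (m : ℕ) (hm : 0 < m)
    (δ : ℝ) (hδ : 0 < δ)
    (μ : Fin n → ℝ) (hμpos : ∀ i, 0 < μ i) (hμle : ∀ i, μ i ≤ (m : ℝ) * δ)
    (q : Fin n → ℝ) (hq : ∀ i, 0 ≤ q i ∧ q i ≤ 1)
    (hfeas : ∑ i, q i * μ i ≤ (m : ℝ) * δ)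
    (S : Finset (Fin n)) (d : Equiv.Perm (Fin n))
    (hSfirst : ∀ i : Fin n, d i ∈ S ↔ (i : ℕ) < S.card)
    (jd : ℕ) (hjdn : jd ≤ n)
    (hle : ∑ i ∈ univ.filter (fun i : Fin n => (i : ℕ) < jd), μ (d i) ≤ (m : ℝ) * δ)
    (hmaxsel : jd = n ∨
      (m : ℝ) * δ < ∑ i ∈ univ.filter (fun i : Fin n => (i : ℕ) < jd + 1), μ (d i))
    (p : Fin n → ℝ)
    (hp : ∀ i : Fin n, p i = if ((d.symm i : ℕ) < jd) then (1 : ℝ) else 0) :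
    (1 - (univ.sup' (univ_nonempty_iff.mpr ⟨⟨0, Nat.pos_of_ne_zero hn⟩⟩) μ) / ((m : ℝ) * δ))
        * ∑ i ∈ S, μ i * q i
      ≤ ∑ i ∈ S, μ i * p i :=
  ts_llref_efficiency_bound_general n hn m δ μ hμpos hμle q hq hfeas S d hSfirst jd hmaxsel p hp
end

section
/- For the two-point workload W ∈ {1, 9} each with probability 1/2 and a policy that processes each of n such i.i.d. tasks for exactly 1 time unit per period with total budget mδ = n, the achieved completion rate is q_i = 1/2 for each user, and Σ_i q_i μ_i = 2.5 n > n = mδ; hence the outer bound inequality Σ_i q_i E[W_i] ≤ mδ fails for non-NBUE workloads. -/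
open MeasureTheory

/-! A task is completed within its one time unit exactly when its workload is 1 (probability 1/2),
yet the mean workload is 5. So each user contributes `q_i E[W] = 5/2` to the left side of the
outer bound while using only one time unit of the budget `m δ = n`. -/

section TwoPoint

variable {Ω : Type*} [MeasurableSpace Ω] {μ : Measure Ω} {W : Ω → ℝ} {a b : ℝ}

theorem measure_le_eq_measure_eq_of_ae_eq_or (hab : a < b)
    (hW : ∀ᵐ ω ∂μ, W ω = a ∨ W ω = b) : μ {ω | W ω ≤ a} = μ {ω | W ω = a} := by
  refine measure_congr ?_
  filter_upwards [hW] with ω hω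
  change (W ω ≤ a) = (W ω = a)
  rcases hω with h | h <;> simp [h, hab.not_ge, hab.ne']

theorem integral_eq_of_ae_eq_or [IsProbabilityMeasure μ] (hWm : Measurable W)
    (hW : ∀ᵐ ω ∂μ, W ω = a ∨ W ω = b) :
    ∫ ω, W ω ∂μ = b + (a - b) * μ.real {ω | W ω = a} := by
  have hA : MeasurableSet {ω | W ω = a} := hWm (measurableSet_singleton a)
  have hW' : W =ᵐ[μ] fun ω => b + {ω | W ω = a}.indicator (fun _ => a - b) ω := by
    filter_upwards [hW] with ω hω
    by_cases h : W ω = a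
    · simp [h]
    · simp [Set.indicator_of_notMem (show ω ∉ {ω | W ω = a} from h), hω.resolve_left h]
  rw [integral_congr_ae hW', integral_add (integrable_const b)
    ((integrable_const (a - b)).indicator hA), integral_indicator_const _ hA]
  simp [mul_comm]

end TwoPoint

theorem non_nbue_outer_bound_fails_general {Ω : Type*} [MeasurableSpace Ω]
    (μ : Measure Ω) [IsProbabilityMeasure μ]
    (W : Ω → ℝ) (hWm : Measurable W)
    (hsupp : ∀ᵐ ω ∂μ, W ω = 1 ∨ W ω = 9)
    (h1 : μ {ω | W ω = 1} = 1 / 2)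
    (n m : ℕ) (hn : 1 ≤ n) (δ : ℝ) (hbudget : (m : ℝ) * δ = n) :
    (μ {ω | W ω ≤ 1}).toReal = 1 / 2
    ∧ ∫ ω, W ω ∂μ = 5
    ∧ (∑ _i : Fin n, (μ {ω | W ω ≤ 1}).toReal * ∫ ω, W ω ∂μ) = 2.5 * n
    ∧ (m : ℝ) * δ < ∑ _i : Fin n, (μ {ω | W ω ≤ 1}).toReal * ∫ ω, W ω ∂μ := by
  have hrate : (μ {ω | W ω ≤ 1}).toReal = 1 / 2 := by
    rw [measure_le_eq_measure_eq_of_ae_eq_or (by norm_num) hsupp, h1]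
    norm_num
  have hmean : ∫ ω, W ω ∂μ = 5 := by
    rw [integral_eq_of_ae_eq_or hWm hsupp, measureReal_def, h1]
    norm_num
  have hsum : (∑ _i : Fin n, (μ {ω | W ω ≤ 1}).toReal * ∫ ω, W ω ∂μ) = 2.5 * n := by
    rw [hrate, hmean, Finset.sum_const, Finset.card_univ, Fintype.card_fin, nsmul_eq_mul]
    ring
  have hn' : (1 : ℝ) ≤ n := by exact_mod_cast hn
  refine ⟨hrate, hmean, hsum, ?_⟩
  rw [hsum, hbudget]
  linarith

/-- Non-NBUE counterexample to the outer bound inequality: with `n` users whose i.i.d.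
workloads take value `1` or `9` each with probability `1/2` (mean `5`), and a policy
spending exactly `1` time unit per task per period (completing a task iff its workload
is `≤ 1`, probability `1/2`) with total budget `m δ = n`, the achieved rates are
`q_i = 1/2` and `Σ_i q_i E[W] = 2.5 n > n = m δ`. -/
theorem non_nbue_outer_bound_fails {Ω : Type*} [MeasurableSpace Ω]
    (μ : Measure Ω) [IsProbabilityMeasure μ]
    (W : Ω → ℝ) (hWm : Measurable W)
    (hsupp : ∀ᵐ ω ∂μ, W ω = 1 ∨ W ω = 9)
    (h1 : μ {ω | W ω = 1} = 1 / 2) (h9 : μ {ω | W ω = 9} = 1 / 2)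
    (n m : ℕ) (hn : 1 ≤ n) (δ : ℝ) (hδ : 0 < δ) (hbudget : (m : ℝ) * δ = n) :
    (μ {ω | W ω ≤ 1}).toReal = 1 / 2
    ∧ ∫ ω, W ω ∂μ = 5
    ∧ (∑ _i : Fin n, (μ {ω | W ω ≤ 1}).toReal * ∫ ω, W ω ∂μ) = 2.5 * n
    ∧ (m : ℝ) * δ < ∑ _i : Fin n, (μ {ω | W ω ≤ 1}).toReal * ∫ ω, W ω ∂μ :=
  non_nbue_outer_bound_fails_general μ W hWm hsupp h1 n m hn δ hbudget
end
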